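/- Let γ > 1 and ℓ := 2/(γ−1). For every (V₋, C₋) ∈ ℝ² with C₋ < −(1+V₋) < 0, there exists a unique (V₊, C₊) ∈ ℝ² with −(1+V₊) < C₊ < 0 such that the pair satisfies the self-similar Rankine–Hugoniot relations. Conversely, for every (V₊, C₊) with −(1+V₊) < C₊ < 0 there exists a unique (V₋, C₋) with C₋ < −(1+V₋) < 0 such that the pair satisfies the self-similar Rankine–Hugoniot relations. (These are admissible self-similar 2-shocks in the case ξ̄/λ > 0, with left states in S²₋ := {C < −(1+V) < 0} and right states in S²₊ := {−(1+V) < C < 0}.) -/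

import Mathlib

/-!
On the half-plane `C < 0` write `c = -C` and `u = 1 + V`. Both states of a shock carry the same
mass flux `m = c ^ ℓ * u`; eliminating `u = m / c ^ ℓ`, the momentum flux becomes a function
`F(c) = m² c^(-ℓ) + c^(ℓ+2) / γ` of `c` alone. Since `γ ℓ = ℓ + 2`,
`F'(c) = ℓ (c^(2ℓ+2) - m²) / c^(ℓ+1)`, so `F` decreases strictly up to `c* = m^(1/(ℓ+1))`,
increases strictly after it, and tends to `∞` at both ends. The condition `c > u` of the left
region is `c > c*` and the condition `c < u` of the right region is `c < c*`, so every value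
`F(c₀)` is attained exactly once on the other side of `c*`.
-/

/-- The self-similar Rankine–Hugoniot relations for the 1-d isentropic Euler
system (with `ℓ = 2/(γ−1)`), relating a left state `Pm = (V₋, C₋)` and a right
state `Pp = (V₊, C₊)`. -/
def RH (γ : ℝ) (Pm Pp : ℝ × ℝ) : Prop :=
  |Pm.2| ^ (2 / (γ - 1)) * (1 + Pm.1) = |Pp.2| ^ (2 / (γ - 1)) * (1 + Pp.1) ∧
  |Pm.2| ^ (2 / (γ - 1)) * ((1 + Pm.1) ^ 2 + Pm.2 ^ 2 / γ)
    = |Pp.2| ^ (2 / (γ - 1)) * ((1 + Pp.1) ^ 2 + Pp.2 ^ 2 / γ)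

open Set Filter Topology

theorem StrictAntiOn.existsUnique_eq_of_tendsto_nhdsGT {f : ℝ → ℝ} {a b y : ℝ} (hba : b < a)
    (hf : ContinuousOn f (Ioc b a)) (hanti : StrictAntiOn f (Ioc b a))
    (hlim : Tendsto f (𝓝[>] b) atTop) (hy : f a < y) : ∃! c ∈ Ioo b a, f c = y := by
  obtain ⟨ε, hεy, hε⟩ := ((hlim.eventually_ge_atTop y).and (Ioo_mem_nhdsGT hba)).exists
  obtain ⟨c, hc, rfl⟩ := intermediate_value_Icc' hε.2.le
    (hf.mono (Icc_subset_Ioc hε.1 le_rfl)) ⟨hy.le, hεy⟩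
  have hca : c ≠ a := by rintro rfl; exact hy.false
  refine ⟨c, ⟨⟨hε.1.trans_le hc.1, hc.2.lt_of_ne hca⟩, rfl⟩, fun d ⟨hd, hfd⟩ => ?_⟩
  exact hanti.injOn (Ioo_subset_Ioc_self hd) ⟨hε.1.trans_le hc.1, hc.2⟩ hfd

theorem StrictMonoOn.existsUnique_eq_of_tendsto_atTop {f : ℝ → ℝ} {a y : ℝ}
    (hf : ContinuousOn f (Ici a)) (hmono : StrictMonoOn f (Ici a))
    (hlim : Tendsto f atTop atTop) (hy : f a < y) : ∃! c ∈ Ioi a, f c = y := by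
  obtain ⟨M, hMy, hM⟩ := ((hlim.eventually_ge_atTop y).and (eventually_gt_atTop a)).exists
  obtain ⟨c, hc, rfl⟩ :=
    intermediate_value_Icc hM.le (hf.mono Icc_subset_Ici_self) ⟨hy.le, hMy⟩
  have hac : a ≠ c := by rintro rfl; exact hy.false
  refine ⟨c, ⟨hc.1.lt_of_ne hac, rfl⟩, fun d ⟨hd, hfd⟩ => ?_⟩
  exact hmono.injOn (mem_Ici.2 hd.le) hc.1 hfd

variable {γ l m c : ℝ}

noncomputable def massFlux (l : ℝ) (P : ℝ × ℝ) : ℝ := |P.2| ^ l * (1 + P.1)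

noncomputable def momentumFlux (γ l : ℝ) (P : ℝ × ℝ) : ℝ :=
  |P.2| ^ l * ((1 + P.1) ^ 2 + P.2 ^ 2 / γ)

noncomputable def hugoniotMomentum (γ l m c : ℝ) : ℝ := m ^ 2 * c ^ (-l) + c ^ (l + 2) / γ

theorem RH_comm {P Q : ℝ × ℝ} : RH γ P Q ↔ RH γ Q P :=
  and_congr eq_comm eq_comm

theorem momentumFlux_eq_hugoniotMomentum {P : ℝ × ℝ} (hP : P.2 < 0) :
    momentumFlux γ l P = hugoniotMomentum γ l (massFlux l P) (-P.2) := by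
  have hc : 0 < -P.2 := neg_pos.2 hP
  have hcl : (-P.2) ^ l ≠ 0 := (Real.rpow_pos_of_pos hc l).ne'
  rw [momentumFlux, massFlux, hugoniotMomentum, abs_of_neg hP, Real.rpow_neg hc.le,
    Real.rpow_add hc, Real.rpow_two]
  field_simp

noncomputable def stateOfMassFlux (l m c : ℝ) : ℝ × ℝ := (m / c ^ l - 1, -c)

theorem massFlux_stateOfMassFlux (hc : 0 < c) : massFlux l (stateOfMassFlux l m c) = m := by
  have hcl : c ^ l ≠ 0 := (Real.rpow_pos_of_pos hc l).ne'
  simp only [massFlux, stateOfMassFlux, abs_neg, abs_of_pos hc]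
  field_simp
  ring

theorem stateOfMassFlux_massFlux {P : ℝ × ℝ} (hP : P.2 < 0) :
    stateOfMassFlux l (massFlux l P) (-P.2) = P := by
  have hcl : (-P.2) ^ l ≠ 0 := (Real.rpow_pos_of_pos (neg_pos.2 hP) l).ne'
  refine Prod.ext ?_ (neg_neg _)
  simp only [stateOfMassFlux, massFlux, abs_of_neg hP]
  field_simp
  ring

theorem flux_eq_iff_of_neg {P₀ P : ℝ × ℝ} (hP₀ : P₀.2 < 0) (hP : P.2 < 0) :
    massFlux l P₀ = massFlux l P ∧ momentumFlux γ l P₀ = momentumFlux γ l P ↔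
      P = stateOfMassFlux l (massFlux l P₀) (-P.2) ∧
        hugoniotMomentum γ l (massFlux l P₀) (-P.2) =
          hugoniotMomentum γ l (massFlux l P₀) (-P₀.2) := by
  rw [momentumFlux_eq_hugoniotMomentum hP₀, momentumFlux_eq_hugoniotMomentum hP]
  constructor
  · rintro ⟨hmass, hmom⟩
    exact ⟨by rw [hmass, stateOfMassFlux_massFlux hP], by rw [hmom, hmass]⟩
  · rintro ⟨hPeq, hmom⟩
    have hmass : massFlux l P₀ = massFlux l P := by
      rw [hPeq, massFlux_stateOfMassFlux (neg_pos.2 hP)]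
    rw [← hmass]
    exact ⟨rfl, hmom.symm⟩

def leftStates : Set (ℝ × ℝ) := {P | P.2 < -(1 + P.1) ∧ -(1 + P.1) < 0}

def rightStates : Set (ℝ × ℝ) := {P | -(1 + P.1) < P.2 ∧ P.2 < 0}

theorem stateOfMassFlux_mem_leftStates_iff (hl : 0 < l + 1) (hm : 0 < m) (hc : 0 < c) :
    stateOfMassFlux l m c ∈ leftStates ↔ m ^ (l + 1)⁻¹ < c := by
  have hcl : 0 < c ^ l := Real.rpow_pos_of_pos hc l
  have hu : 1 + (m / c ^ l - 1) = m / c ^ l := by ring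
  rw [Real.rpow_inv_lt_iff_of_pos hm.le hc.le hl, Real.rpow_add_one hc.ne', mul_comm,
    ← div_lt_iff₀ hcl]
  simp only [leftStates, stateOfMassFlux, mem_ofPred_eq, hu, neg_lt_neg_iff, neg_lt_zero,
    div_pos hm hcl, and_true]

theorem stateOfMassFlux_mem_rightStates_iff (hl : 0 < l + 1) (hm : 0 ≤ m) (hc : 0 < c) :
    stateOfMassFlux l m c ∈ rightStates ↔ c < m ^ (l + 1)⁻¹ := by
  have hcl : 0 < c ^ l := Real.rpow_pos_of_pos hc l
  have hu : 1 + (m / c ^ l - 1) = m / c ^ l := by ring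
  rw [Real.lt_rpow_inv_iff_of_pos hc.le hm hl, Real.rpow_add_one hc.ne', mul_comm,
    ← lt_div_iff₀ hcl]
  simp only [rightStates, stateOfMassFlux, mem_ofPred_eq, hu, neg_lt_neg_iff, neg_lt_zero, hc,
    and_true]

theorem hasDerivAt_hugoniotMomentum (hγ : γ ≠ 0) (hγl : γ * l = l + 2) (hc : 0 < c) :
    HasDerivAt (hugoniotMomentum γ l m)
      (l * (c ^ (l + 1) - m) * (c ^ (l + 1) + m) / c ^ (l + 1)) c := by
  refine (((Real.hasDerivAt_rpow_const (p := -l) (Or.inl hc.ne')).const_mul (m ^ 2)).add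
    ((Real.hasDerivAt_rpow_const (p := l + 2) (Or.inl hc.ne')).div_const γ)).congr_deriv ?_
  rw [show -l - 1 = -(l + 1) by ring, show l + 2 - 1 = l + 1 by ring, Real.rpow_neg hc.le]
  field_simp
  linear_combination (-c ^ (l + 1) * c ^ (l + 1)) * hγl

theorem continuousOn_hugoniotMomentum : ContinuousOn (hugoniotMomentum γ l m) (Ioi 0) :=
  fun c hc => by
    have hc₀ : c ≠ 0 := ne_of_gt hc
    unfold hugoniotMomentum
    apply ContinuousAt.continuousWithinAt
    fun_prop (disch := exact Or.inl hc₀)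

theorem tendsto_hugoniotMomentum_nhdsGT_zero (hγ : 0 ≤ γ) (hl : 0 < l) (hm : m ≠ 0) :
    Tendsto (hugoniotMomentum γ l m) (𝓝[>] 0) atTop := by
  refine tendsto_atTop_mono' _ ?_
    (Tendsto.const_mul_atTop (sq_pos_of_ne_zero hm)
      (tendsto_rpow_neg_nhdsGT_zero (neg_lt_zero.2 hl)))
  filter_upwards [self_mem_nhdsWithin] with c hc
  have : 0 ≤ c ^ (l + 2) / γ := by have := Real.rpow_nonneg (le_of_lt hc) (l + 2); positivity
  exact le_add_of_nonneg_right this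

theorem tendsto_hugoniotMomentum_atTop (hγ : 0 < γ) (hl : 0 < l + 2) :
    Tendsto (hugoniotMomentum γ l m) atTop atTop := by
  refine tendsto_atTop_mono' _ ?_ ((tendsto_rpow_atTop hl).atTop_div_const hγ)
  filter_upwards [eventually_ge_atTop 0] with c hc
  have : 0 ≤ m ^ 2 * c ^ (-l) := by have := Real.rpow_nonneg hc (-l); positivity
  exact le_add_of_nonneg_left this

theorem strictAntiOn_hugoniotMomentum (hγ : γ ≠ 0) (hγl : γ * l = l + 2) (hl : 0 < l)
    (hm : 0 < m) : StrictAntiOn (hugoniotMomentum γ l m) (Ioc 0 (m ^ (l + 1)⁻¹)) := by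
  refine strictAntiOn_of_hasDerivWithinAt_neg (convex_Ioc _ _)
    (continuousOn_hugoniotMomentum.mono Ioc_subset_Ioi_self)
    (fun c hc => (hasDerivAt_hugoniotMomentum hγ hγl (interior_subset hc).1).hasDerivWithinAt)
    fun c hc => ?_
  rw [interior_Ioc] at hc
  have hcm : c ^ (l + 1) < m := (Real.lt_rpow_inv_iff_of_pos hc.1.le hm.le (by linarith)).1 hc.2
  have hc' : 0 < c ^ (l + 1) := Real.rpow_pos_of_pos hc.1 _
  exact div_neg_of_neg_of_pos
    (mul_neg_of_neg_of_pos (mul_neg_of_pos_of_neg hl (sub_neg.2 hcm)) (by positivity)) hc'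

theorem strictMonoOn_hugoniotMomentum (hγ : γ ≠ 0) (hγl : γ * l = l + 2) (hl : 0 < l)
    (hm : 0 < m) : StrictMonoOn (hugoniotMomentum γ l m) (Ici (m ^ (l + 1)⁻¹)) := by
  have ha : 0 < m ^ (l + 1)⁻¹ := Real.rpow_pos_of_pos hm _
  refine strictMonoOn_of_hasDerivWithinAt_pos (convex_Ici _)
    (continuousOn_hugoniotMomentum.mono (Ici_subset_Ioi.2 ha))
    (fun c hc => (hasDerivAt_hugoniotMomentum hγ hγl
      (ha.trans_le (interior_subset hc))).hasDerivWithinAt)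
    fun c hc => ?_
  rw [interior_Ici] at hc
  have hc0 : 0 < c := ha.trans hc
  have hcm : m < c ^ (l + 1) := (Real.rpow_inv_lt_iff_of_pos hm.le hc0.le (by linarith)).1 hc
  have hc' : 0 < c ^ (l + 1) := Real.rpow_pos_of_pos hc0 _
  exact div_pos (mul_pos (mul_pos hl (sub_pos.2 hcm)) (by positivity)) hc'

theorem existsUnique_hugoniotMomentum_eq_of_lt (hγ : 0 < γ) (hγl : γ * l = l + 2)
    (hl : 0 < l) (hm : 0 < m) (hc : m ^ (l + 1)⁻¹ < c) :
    ∃! c' ∈ Ioo 0 (m ^ (l + 1)⁻¹), hugoniotMomentum γ l m c' = hugoniotMomentum γ l m c :=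
  (strictAntiOn_hugoniotMomentum hγ.ne' hγl hl hm).existsUnique_eq_of_tendsto_nhdsGT
    (Real.rpow_pos_of_pos hm _) (continuousOn_hugoniotMomentum.mono Ioc_subset_Ioi_self)
    (tendsto_hugoniotMomentum_nhdsGT_zero hγ.le hl hm.ne')
    (strictMonoOn_hugoniotMomentum hγ.ne' hγl hl hm self_mem_Ici hc.le hc)

theorem existsUnique_hugoniotMomentum_eq_of_gt (hγ : 0 < γ) (hγl : γ * l = l + 2)
    (hl : 0 < l) (hm : 0 < m) (hc : c ∈ Ioo 0 (m ^ (l + 1)⁻¹)) :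
    ∃! c' ∈ Ioi (m ^ (l + 1)⁻¹), hugoniotMomentum γ l m c' = hugoniotMomentum γ l m c :=
  (strictMonoOn_hugoniotMomentum hγ.ne' hγl hl hm).existsUnique_eq_of_tendsto_atTop
    (continuousOn_hugoniotMomentum.mono (Ici_subset_Ioi.2 (Real.rpow_pos_of_pos hm _)))
    (tendsto_hugoniotMomentum_atTop hγ (by linarith))
    (strictAntiOn_hugoniotMomentum hγ.ne' hγl hl hm (Ioo_subset_Ioc_self hc)
      ⟨hc.1.trans hc.2, le_rfl⟩ hc.2)

theorem existsUnique_flux_eq_of_existsUnique_hugoniotMomentum_eq {S : Set (ℝ × ℝ)}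
    {s : Set ℝ} {P₀ : ℝ × ℝ} (hP₀ : P₀.2 < 0) (hS : ∀ P ∈ S, P.2 < 0)
    (hs : s ⊆ Ioi 0)
    (hSs : ∀ c > 0, stateOfMassFlux l (massFlux l P₀) c ∈ S ↔ c ∈ s)
    (h : ∃! c ∈ s, hugoniotMomentum γ l (massFlux l P₀) c =
      hugoniotMomentum γ l (massFlux l P₀) (-P₀.2)) :
    ∃! P ∈ S,
      massFlux l P₀ = massFlux l P ∧ momentumFlux γ l P₀ = momentumFlux γ l P := by
  obtain ⟨c, ⟨hcs, hmom⟩, huniq⟩ := h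
  have hc : 0 < c := hs hcs
  have hcS := (hSs c hc).2 hcs
  refine ⟨_, ⟨hcS, (flux_eq_iff_of_neg hP₀ (hS _ hcS)).2 ?_⟩, ?_⟩
  · simpa only [stateOfMassFlux, neg_neg, true_and] using hmom
  · rintro P ⟨hPS, hflux⟩
    have hP := hS P hPS
    obtain ⟨hPeq, hPmom⟩ := (flux_eq_iff_of_neg hP₀ hP).1 hflux
    rw [hPeq] at hPS ⊢
    rw [huniq (-P.2) ⟨(hSs _ (neg_pos.2 hP)).1 hPS, hPmom⟩]

theorem mul_two_div_sub_one (hγ : γ ≠ 1) : γ * (2 / (γ - 1)) = 2 / (γ - 1) + 2 := by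
  field_simp [sub_ne_zero.2 hγ]
  ring

theorem existsUnique_mem_rightStates_RH (hγ : 1 < γ) {P₀ : ℝ × ℝ}
    (hP₀ : P₀ ∈ leftStates) :
    ∃! P ∈ rightStates, RH γ P₀ P := by
  have hl : 0 < 2 / (γ - 1) := div_pos two_pos (sub_pos.2 hγ)
  have hl₁ : 0 < 2 / (γ - 1) + 1 := by linarith
  have hC : P₀.2 < 0 := hP₀.1.trans hP₀.2
  have hm : 0 < massFlux (2 / (γ - 1)) P₀ :=
    mul_pos (Real.rpow_pos_of_pos (abs_pos.2 hC.ne) _) (neg_lt_zero.1 hP₀.2)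
  have hc₀ := (stateOfMassFlux_mem_leftStates_iff hl₁ hm (neg_pos.2 hC)).1
    (by rwa [stateOfMassFlux_massFlux hC])
  refine existsUnique_flux_eq_of_existsUnique_hugoniotMomentum_eq hC (fun P hP => hP.2)
    (fun c hc => hc.1) (fun c hc => ?_)
    (existsUnique_hugoniotMomentum_eq_of_lt (by linarith) (mul_two_div_sub_one hγ.ne') hl hm
      hc₀)
  rw [stateOfMassFlux_mem_rightStates_iff hl₁ hm.le hc]
  exact ⟨fun h => ⟨hc, h⟩, And.right⟩

theorem existsUnique_mem_leftStates_RH (hγ : 1 < γ) {P₀ : ℝ × ℝ}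
    (hP₀ : P₀ ∈ rightStates) :
    ∃! P ∈ leftStates, RH γ P P₀ := by
  have hl : 0 < 2 / (γ - 1) := div_pos two_pos (sub_pos.2 hγ)
  have hl₁ : 0 < 2 / (γ - 1) + 1 := by linarith
  have hC : P₀.2 < 0 := hP₀.2
  have hm : 0 < massFlux (2 / (γ - 1)) P₀ :=
    mul_pos (Real.rpow_pos_of_pos (abs_pos.2 hC.ne) _) (by linarith [hP₀.1])
  have hc₀ := (stateOfMassFlux_mem_rightStates_iff hl₁ hm.le (neg_pos.2 hC)).1
    (by rwa [stateOfMassFlux_massFlux hC])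
  refine (existsUnique_congr fun P => and_congr_right fun _ => RH_comm).1 ?_
  exact existsUnique_flux_eq_of_existsUnique_hugoniotMomentum_eq hC (fun P hP => hP.1.trans hP.2)
    (Ioi_subset_Ioi (Real.rpow_pos_of_pos hm _).le)
    (fun c hc => stateOfMassFlux_mem_leftStates_iff hl₁ hm hc)
    (existsUnique_hugoniotMomentum_eq_of_gt (by linarith) (mul_two_div_sub_one hγ.ne') hl hm
      ⟨neg_pos.2 hC, hc₀⟩)

/-- admissible self-similar 2-shocks with `ξ̄/λ > 0`: each left
state in `S²₋ = {C < −(1+V) < 0}` has a unique right state in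
`S²₊ = {−(1+V) < C < 0}` satisfying the Rankine–Hugoniot relations, and
conversely. -/
theorem stmt_15 (γ : ℝ) (hγ : 1 < γ) :
    (∀ Vm Cm : ℝ, Cm < -(1 + Vm) → -(1 + Vm) < 0 →
      ∃! Pp : ℝ × ℝ, (-(1 + Pp.1) < Pp.2 ∧ Pp.2 < 0) ∧ RH γ (Vm, Cm) Pp) ∧
    (∀ Vp Cp : ℝ, -(1 + Vp) < Cp → Cp < 0 →
      ∃! Pm : ℝ × ℝ, (Pm.2 < -(1 + Pm.1) ∧ -(1 + Pm.1) < 0) ∧ RH γ Pm (Vp, Cp)) :=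
  ⟨fun _ _ h₁ h₂ => existsUnique_mem_rightStates_RH hγ ⟨h₁, h₂⟩,
    fun _ _ h₁ h₂ => existsUnique_mem_leftStates_RH hγ ⟨h₁, h₂⟩⟩
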